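/- arXiv:1307.0914 — 2 statements merged into one kernel-verified Lean document; each statement's English description precedes it below -/
import Mathlib

section
/- If u, v, p : ℤ³ → ℝ satisfy the four difference equations e₁ = e₂ = e₃ = e₄ = 0 of FDA 1 at every grid point, then the shifted continuity residual satisfies e₁(j,k,n+1) = 0 automatically, i.e., the scheme preserves the discrete continuity equation from one time level to the next provided e₂, e₃, e₄ and e₁ at time level n vanish. -/
noncomputable section

def E1 (h : ℝ) (u v : ℤ → ℤ → ℤ → ℝ) (j k n : ℤ) : ℝ :=
  (u (j+1) k n - u (j-1) k n) / (2*h) + (v j (k+1) n - v j (k-1) n) / (2*h)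

def E2 (Re h τ : ℝ) (u v p : ℤ → ℤ → ℤ → ℝ) (j k n : ℤ) : ℝ :=
  (u j k (n+1) - u j k n) / τ
    + ((u (j+1) k n)^2 - (u (j-1) k n)^2) / (2*h)
    + (v j (k+1) n * u j (k+1) n - v j (k-1) n * u j (k-1) n) / (2*h)
    + (p (j+1) k n - p (j-1) k n) / (2*h)
    - (1/Re) * ((u (j+2) k n - 2 * u j k n + u (j-2) k n) / (4*h^2)
              + (u j (k+2) n - 2 * u j k n + u j (k-2) n) / (4*h^2))

def E3 (Re h τ : ℝ) (u v p : ℤ → ℤ → ℤ → ℝ) (j k n : ℤ) : ℝ :=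
  (v j k (n+1) - v j k n) / τ
    + (u (j+1) k n * v (j+1) k n - u (j-1) k n * v (j-1) k n) / (2*h)
    + ((v j (k+1) n)^2 - (v j (k-1) n)^2) / (2*h)
    + (p j (k+1) n - p j (k-1) n) / (2*h)
    - (1/Re) * ((v (j+2) k n - 2 * v j k n + v (j-2) k n) / (4*h^2)
              + (v j (k+2) n - 2 * v j k n + v j (k-2) n) / (4*h^2))

def E4 (h : ℝ) (u v p : ℤ → ℤ → ℤ → ℝ) (j k n : ℤ) : ℝ :=
  ((u (j+2) k n)^2 - 2 * (u j k n)^2 + (u (j-2) k n)^2) / (4*h^2)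
    + ((v j (k+2) n)^2 - 2 * (v j k n)^2 + (v j (k-2) n)^2) / (4*h^2)
    + 2 * (u (j+1) (k+1) n * v (j+1) (k+1) n - u (j+1) (k-1) n * v (j+1) (k-1) n
           - u (j-1) (k+1) n * v (j-1) (k+1) n + u (j-1) (k-1) n * v (j-1) (k-1) n) / (4*h^2)
    + (p (j+2) k n - 2 * p j k n + p (j-2) k n) / (4*h^2)
    + (p j (k+2) n - 2 * p j k n + p j (k-2) n) / (4*h^2)

end

set_option maxHeartbeats 2000000 in
theorem fda1_preserves_discrete_continuity (Re h τ : ℝ) (hRe : 0 < Re) (hh : 0 < h) (hτ : 0 < τ)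
    (u v p : ℤ → ℤ → ℤ → ℝ) (j k n : ℤ)
    (h2 : E2 Re h τ u v p (j-1) k n = 0)
    (h3p : E3 Re h τ u v p j (k+1) n = 0)
    (h3m : E3 Re h τ u v p j (k-1) n = 0)
    (h4 : E4 h u v p j k n = 0)
    (h1 : ∀ j' k' : ℤ, E1 h u v j' k' n = 0)
    (h2all : ∀ j' k' : ℤ, E2 Re h τ u v p j' k' n = 0) :
    E1 h u v j k (n+1) = 0 := by
  have h2p := h2all (j+1) k
  simp only [E1, E2, E3, E4] at *
  have e2 : (2:ℤ) = 1+1 := by norm_num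
  ring_nf at h2 h3p h3m h4 h2p ⊢
  have l1 := h1 j k
  have l2 := h1 (j+2) k
  have l3 := h1 (j-2) k
  have l4 := h1 j (k+2)
  have l5 := h1 j (k-2)
  ring_nf at l1 l2 l3 l4 l5
  have hτ0 : τ ≠ 0 := ne_of_gt hτ
  have hh0 : h ≠ 0 := ne_of_gt hh
  have hRe0 : Re ≠ 0 := ne_of_gt hRe
  linear_combination (norm := (field_simp; ring)) (τ/(2*h)) * h2p - (τ/(2*h)) * h2 + (τ/(2*h)) * h3p - (τ/(2*h)) * h3m - τ * h4 + (τ/(Re*4*h^2)) * (l2 + l3 + l4 + l5 - 4*l1) + l1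
end

section
/- Let u, v, p : ℝ³ → ℝ be smooth and, for h, τ > 0, evaluate the FDA 1 residual e₂ at the grid point (x, y, t) by setting u_{j+a,k+b}^{n+c} = u(x+ah, y+bh, t+cτ) etc. Then as (h, τ) → (0,0), e₂ converges to u_t + (u²)_x + (vu)_y + p_x - (1/Re)(u_xx + u_yy) evaluated at (x,y,t), which equals f₂ + u·f₁ where f₁ = u_x + v_y and f₂ = u_t + u u_x + v u_y + p_x - (1/Re)(u_xx + u_yy); in particular FDA 1's second equation is weakly consistent with a differential consequence of the Navier–Stokes system. -/
open Filter Topology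

noncomputable def pdx (f : ℝ → ℝ → ℝ → ℝ) : ℝ → ℝ → ℝ → ℝ :=
  fun x y t => deriv (fun s => f s y t) x

noncomputable def pdy (f : ℝ → ℝ → ℝ → ℝ) : ℝ → ℝ → ℝ → ℝ :=
  fun x y t => deriv (fun s => f x s t) y

noncomputable def pdt (f : ℝ → ℝ → ℝ → ℝ) : ℝ → ℝ → ℝ → ℝ :=
  fun x y t => deriv (fun s => f x y s) t

lemma tendsto_add_right_nhdsNE (a : ℝ) :
    Tendsto (fun τ : ℝ => a + τ) (𝓝[>] 0) (𝓝[≠] a) := by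
  apply tendsto_nhdsWithin_of_tendsto_nhds_of_eventually_within
  · have : Tendsto (fun τ : ℝ => a + τ) (𝓝 0) (𝓝 (a + 0)) :=
      (continuous_const.add continuous_id).tendsto 0
    simpa using this.mono_left nhdsWithin_le_nhds
  · filter_upwards [self_mem_nhdsWithin] with τ hτ
    simp only [Set.mem_Ioi] at hτ
    simp [Set.mem_compl_singleton_iff, ne_of_gt hτ]

lemma tendsto_sub_right_nhdsNE (a : ℝ) :
    Tendsto (fun τ : ℝ => a - τ) (𝓝[>] 0) (𝓝[≠] a) := by
  apply tendsto_nhdsWithin_of_tendsto_nhds_of_eventually_within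
  · have : Tendsto (fun τ : ℝ => a - τ) (𝓝 0) (𝓝 (a - 0)) :=
      (continuous_const.sub continuous_id).tendsto 0
    simpa using this.mono_left nhdsWithin_le_nhds
  · filter_upwards [self_mem_nhdsWithin] with τ hτ
    simp only [Set.mem_Ioi] at hτ
    simp [Set.mem_compl_singleton_iff, sub_eq_self, ne_of_gt hτ]

lemma forward_diff {g : ℝ → ℝ} (hg : ContDiff ℝ (⊤ : ℕ∞) g) (a : ℝ) :
    Tendsto (fun τ : ℝ => (g (a + τ) - g a) / τ) (𝓝[>] 0) (𝓝 (deriv g a)) := by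
  have hd : HasDerivAt g (deriv g a) a := (hg.differentiable (by simp) a).hasDerivAt
  have hs := hasDerivAt_iff_tendsto_slope.mp hd
  have := hs.comp (tendsto_add_right_nhdsNE a)
  refine this.congr fun τ => ?_
  simp [Function.comp, slope_def_field]

lemma central_diff {g : ℝ → ℝ} (hg : ContDiff ℝ (⊤ : ℕ∞) g) (a : ℝ) :
    Tendsto (fun h : ℝ => (g (a + h) - g (a - h)) / (2 * h)) (𝓝[>] 0) (𝓝 (deriv g a)) := by
  have hd : HasDerivAt g (deriv g a) a := (hg.differentiable (by simp) a).hasDerivAt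
  have hs := hasDerivAt_iff_tendsto_slope.mp hd
  have T1 := hs.comp (tendsto_add_right_nhdsNE a)
  have T2 := hs.comp (tendsto_sub_right_nhdsNE a)
  have T : Tendsto (fun h : ℝ => (slope g a (a + h) + slope g a (a - h)) / 2) (𝓝[>] 0)
      (𝓝 ((deriv g a + deriv g a) / 2)) := (T1.add T2).div_const 2
  have T' : Tendsto (fun h : ℝ => (slope g a (a + h) + slope g a (a - h)) / 2) (𝓝[>] 0)
      (𝓝 (deriv g a)) := by
    convert T using 2; ring
  refine T'.congr' ?_
  filter_upwards [self_mem_nhdsWithin] with h hh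
  simp only [Set.mem_Ioi] at hh
  have hne : h ≠ 0 := ne_of_gt hh
  have e1 : slope g a (a + h) = (g (a + h) - g a) / h := by
    rw [slope_def_field]; congr 1; ring
  have e2 : slope g a (a - h) = (g (a - h) - g a) / (-h) := by
    rw [slope_def_field]; congr 1; ring
  rw [e1, e2, div_neg, ← sub_eq_add_neg, div_sub_div_same, div_div]
  congr 1
  · ring
  · ring

lemma second_diff {g : ℝ → ℝ} (hg : ContDiff ℝ (⊤ : ℕ∞) g) (a : ℝ) :
    Tendsto (fun h : ℝ => (g (a + h) - 2 * g a + g (a - h)) / h ^ 2) (𝓝[>] 0)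
      (𝓝 (deriv (deriv g) a)) := by
  have hg' : ContDiff ℝ (⊤ : ℕ∞) (deriv g) := (contDiff_infty_iff_deriv.mp hg).2
  have hd : ∀ z : ℝ, HasDerivAt g (deriv g z) z := fun z =>
    (hg.differentiable (by simp) z).hasDerivAt
  apply HasDerivAt.lhopital_zero_nhdsGT
    (f' := fun h : ℝ => deriv g (a + h) - deriv g (a - h)) (g' := fun h : ℝ => 2 * h)
  · filter_upwards with h
    have i1 : HasDerivAt (fun h : ℝ => a + h) 1 h := by
      simpa using (hasDerivAt_id h).const_add a
    have i2 : HasDerivAt (fun h : ℝ => a - h) (-1) h := by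
      simpa using (hasDerivAt_id h).const_sub a
    have h1 : HasDerivAt (fun h : ℝ => g (a + h)) (deriv g (a + h)) h := by
      simpa [Function.comp_def] using (hd (a + h)).comp h i1
    have h2 : HasDerivAt (fun h : ℝ => g (a - h)) (-(deriv g (a - h))) h := by
      simpa [Function.comp_def] using (hd (a - h)).comp h i2
    have := (h1.sub_const (2 * g a)).add h2
    simpa [sub_eq_add_neg, Pi.add_def] using this
  · filter_upwards with h
    simpa using hasDerivAt_pow 2 h
  · filter_upwards [self_mem_nhdsWithin] with h hh
    simp only [Set.mem_Ioi] at hh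
    positivity
  · have hc : Continuous fun h : ℝ => g (a + h) - 2 * g a + g (a - h) := by
      exact ((hg.continuous.comp (continuous_const.add continuous_id)).sub
        continuous_const).add (hg.continuous.comp (continuous_const.sub continuous_id))
    have := hc.tendsto 0
    simp only [add_zero, sub_zero] at this
    have h0 : g a - 2 * g a + g a = 0 := by ring
    rw [h0] at this
    exact this.mono_left nhdsWithin_le_nhds
  · have : Tendsto (fun h : ℝ => h ^ 2) (𝓝 0) (𝓝 (0 ^ 2)) := (continuous_pow 2).tendsto 0
    simpa using this.mono_left nhdsWithin_le_nhds
  · exact central_diff hg' a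

lemma second_diff2 {g : ℝ → ℝ} (hg : ContDiff ℝ (⊤ : ℕ∞) g) (a : ℝ) :
    Tendsto (fun h : ℝ => (g (a + 2 * h) - 2 * g a + g (a - 2 * h)) / (4 * h ^ 2)) (𝓝[>] 0)
      (𝓝 (deriv (deriv g) a)) := by
  have hmap : Tendsto (fun h : ℝ => 2 * h) (𝓝[>] (0:ℝ)) (𝓝[>] (0:ℝ)) := by
    apply tendsto_nhdsWithin_of_tendsto_nhds_of_eventually_within
    · have : Tendsto (fun h : ℝ => 2 * h) (𝓝 0) (𝓝 (2 * 0)) :=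
        (continuous_const.mul continuous_id).tendsto 0
      simpa using this.mono_left nhdsWithin_le_nhds
    · filter_upwards [self_mem_nhdsWithin] with h hh
      simp only [Set.mem_Ioi] at hh ⊢
      linarith
  have := (second_diff hg a).comp hmap
  refine this.congr fun h => ?_
  simp only [Function.comp]
  ring_nf

theorem fda1_e2_weakly_consistent (Re : ℝ) (hRe : 0 < Re)
    (u v p : ℝ → ℝ → ℝ → ℝ)
    (hu : ContDiff ℝ (⊤ : ℕ∞) (fun q : ℝ × ℝ × ℝ => u q.1 q.2.1 q.2.2))
    (hv : ContDiff ℝ (⊤ : ℕ∞) (fun q : ℝ × ℝ × ℝ => v q.1 q.2.1 q.2.2))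
    (hp : ContDiff ℝ (⊤ : ℕ∞) (fun q : ℝ × ℝ × ℝ => p q.1 q.2.1 q.2.2))
    (x y t : ℝ) :
    Tendsto
      (fun hτ : ℝ × ℝ =>
        (u x y (t + hτ.2) - u x y t) / hτ.2
          + ((u (x + hτ.1) y t) ^ 2 - (u (x - hτ.1) y t) ^ 2) / (2 * hτ.1)
          + (v x (y + hτ.1) t * u x (y + hτ.1) t - v x (y - hτ.1) t * u x (y - hτ.1) t)
              / (2 * hτ.1)
          + (p (x + hτ.1) y t - p (x - hτ.1) y t) / (2 * hτ.1)
          - (1 / Re) *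
              ((u (x + 2 * hτ.1) y t - 2 * u x y t + u (x - 2 * hτ.1) y t) / (4 * hτ.1 ^ 2)
               + (u x (y + 2 * hτ.1) t - 2 * u x y t + u x (y - 2 * hτ.1) t) / (4 * hτ.1 ^ 2)))
      ((𝓝[>] 0) ×ˢ (𝓝[>] 0))
      (𝓝 (pdt u x y t + pdx (fun a b c => (u a b c) ^ 2) x y t
            + pdy (fun a b c => v a b c * u a b c) x y t + pdx p x y t
            - (1 / Re) * (pdx (pdx u) x y t + pdy (pdy u) x y t)))
    ∧ pdt u x y t + pdx (fun a b c => (u a b c) ^ 2) x y t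
        + pdy (fun a b c => v a b c * u a b c) x y t + pdx p x y t
        - (1 / Re) * (pdx (pdx u) x y t + pdy (pdy u) x y t)
      = (pdt u x y t + u x y t * pdx u x y t + v x y t * pdy u x y t + pdx p x y t
          - (1 / Re) * (pdx (pdx u) x y t + pdy (pdy u) x y t))
        + u x y t * (pdx u x y t + pdy v x y t) := by
  have hu' : ContDiff ℝ (⊤ : ℕ∞) (fun q : ℝ × ℝ × ℝ => u q.1 q.2.1 q.2.2) := hu.of_le (by simp)
  have hv' : ContDiff ℝ (⊤ : ℕ∞) (fun q : ℝ × ℝ × ℝ => v q.1 q.2.1 q.2.2) := hv.of_le (by simp)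
  have hp' : ContDiff ℝ (⊤ : ℕ∞) (fun q : ℝ × ℝ × ℝ => p q.1 q.2.1 q.2.2) := hp.of_le (by simp)
  have mx : ContDiff ℝ (⊤ : ℕ∞) (fun s : ℝ => ((s, (y, t)) : ℝ × ℝ × ℝ)) :=
    contDiff_id.prodMk contDiff_const
  have my : ContDiff ℝ (⊤ : ℕ∞) (fun s : ℝ => ((x, (s, t)) : ℝ × ℝ × ℝ)) :=
    contDiff_const.prodMk (contDiff_id.prodMk contDiff_const)
  have mt : ContDiff ℝ (⊤ : ℕ∞) (fun s : ℝ => ((x, (y, s)) : ℝ × ℝ × ℝ)) :=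
    contDiff_const.prodMk (contDiff_const.prodMk contDiff_id)
  have hx_u : ContDiff ℝ (⊤ : ℕ∞) (fun s => u s y t) := hu'.comp mx
  have hy_u : ContDiff ℝ (⊤ : ℕ∞) (fun s => u x s t) := hu'.comp my
  have ht_u : ContDiff ℝ (⊤ : ℕ∞) (fun s => u x y s) := hu'.comp mt
  have hy_v : ContDiff ℝ (⊤ : ℕ∞) (fun s => v x s t) := hv'.comp my
  have hx_p : ContDiff ℝ (⊤ : ℕ∞) (fun s => p s y t) := hp'.comp mx
  refine ⟨?_, ?_⟩
  · have T1 := (forward_diff ht_u t).comp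
      (tendsto_snd : Tendsto Prod.snd ((𝓝[>] (0:ℝ)) ×ˢ (𝓝[>] (0:ℝ))) _)
    have T2 := (central_diff (hx_u.pow 2) x).comp
      (tendsto_fst : Tendsto Prod.fst ((𝓝[>] (0:ℝ)) ×ˢ (𝓝[>] (0:ℝ))) _)
    have T3 := (central_diff (hy_v.mul hy_u) y).comp
      (tendsto_fst : Tendsto Prod.fst ((𝓝[>] (0:ℝ)) ×ˢ (𝓝[>] (0:ℝ))) _)
    have T4 := (central_diff hx_p x).comp
      (tendsto_fst : Tendsto Prod.fst ((𝓝[>] (0:ℝ)) ×ˢ (𝓝[>] (0:ℝ))) _)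
    have T5 := (second_diff2 hx_u x).comp
      (tendsto_fst : Tendsto Prod.fst ((𝓝[>] (0:ℝ)) ×ˢ (𝓝[>] (0:ℝ))) _)
    have T6 := (second_diff2 hy_u y).comp
      (tendsto_fst : Tendsto Prod.fst ((𝓝[>] (0:ℝ)) ×ˢ (𝓝[>] (0:ℝ))) _)
    exact (((T1.add T2).add T3).add T4).sub ((T5.add T6).const_mul (1 / Re))
  · have d1 : HasDerivAt (fun s => u s y t) (deriv (fun s => u s y t) x) x :=
      (hx_u.differentiable (by simp) x).hasDerivAt
    have dv : HasDerivAt (fun s => v x s t) (deriv (fun s => v x s t) y) y :=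
      (hy_v.differentiable (by simp) y).hasDerivAt
    have du : HasDerivAt (fun s => u x s t) (deriv (fun s => u x s t) y) y :=
      (hy_u.differentiable (by simp) y).hasDerivAt
    have d2 : deriv (fun s => u s y t ^ 2) x
        = 2 * u x y t * deriv (fun s => u s y t) x := by
      simpa using (d1.fun_pow 2).deriv
    have d3 : deriv (fun s => v x s t * u x s t) y
        = deriv (fun s => v x s t) y * u x y t + v x y t * deriv (fun s => u x s t) y :=
      (dv.mul du).deriv
    simp only [pdx, pdy, pdt]
    rw [d2, d3]
    ring
end
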